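/- arXiv:2006.08406 — 2 statements merged into one kernel-verified Lean document; each statement's English description precedes it below -/
import Mathlib

section
/- Special case m=2 of the cosine formula: for every integer k ≥ 1, ∑_{j=1}^{∞} (-1)^j/j^{2k} = ∑_{j=0}^{k} ((-1)^{k-j}/(2k-2j)!)·π^{2k-2j}·ζ(2j) + ((-1)^k/(2(2k-1)!))·π^{2k}, where ζ(0) = −1/2; equivalently (2^{1-2k} − 1)·ζ(2k) equals the right-hand side. -/
/-!
Expanding the Bernoulli polynomial in the closed form
`∑ cos (2π n x) / n ^ (2k) = (-1) ^ (k + 1) (2π) ^ (2k) / (2 (2k)!) · B₂ₖ(x)` (valid on `[0, 1]`)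
and substituting Euler's formula for each `ζ(2j)` turns it into a polynomial in `x` with
zeta-value coefficients, in which only `B₁` contributes an odd power of `x`. At `x = 1/2` the left
side is `∑ (-1) ^ n / n ^ (2k)`, and splitting the zeta series into even and odd terms shows this
equals `(2 ^ (1 - 2k) - 1) ζ(2k)`.
-/

open Real Complex

open Finset
open scoped Nat

theorem Finset.sum_range_two_mul_add_one {M : Type*} [AddCommMonoid M] (f : ℕ → M) (n : ℕ) :
    ∑ i ∈ range (2 * n + 1), f i =
      ∑ j ∈ range (n + 1), f (2 * j) + ∑ j ∈ range n, f (2 * j + 1) := by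
  induction n with
  | zero => simp
  | succ n ih =>
    rw [show 2 * (n + 1) + 1 = 2 * n + 1 + 1 + 1 by ring, sum_range_succ, sum_range_succ, ih,
      sum_range_succ (fun j => f (2 * j)) (n + 1), sum_range_succ (fun j => f (2 * j + 1)) n,
      show 2 * (n + 1) = 2 * n + 1 + 1 by ring]
    abel

theorem Polynomial.eval_map_bernoulli_two_mul {K : Type*} [Field K] [CharZero K] {k : ℕ}
    (hk : k ≠ 0) (x : K) :
    ((bernoulli (2 * k)).map (algebraMap ℚ K)).eval x =
      ∑ j ∈ range (k + 1),
        (_root_.bernoulli (2 * j) * (2 * k).choose (2 * j) : K) * x ^ (2 * k - 2 * j)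
        - k * x ^ (2 * k - 1) := by
  have hodd : ∑ j ∈ range k,
      (_root_.bernoulli (2 * j + 1) * (2 * k).choose (2 * j + 1) : K) * x ^ (2 * k - (2 * j + 1))
        = -k * x ^ (2 * k - 1) := by
    rw [sum_eq_single_of_mem 0 (mem_range.2 (Nat.pos_of_ne_zero hk))]
    · simp [_root_.bernoulli_one]
      ring
    · intro j _ hj
      rw [bernoulli_eq_zero_of_odd (odd_two_mul_add_one j) (by omega)]
      simp
  rw [Polynomial.bernoulli, Polynomial.map_sum, Polynomial.eval_finsetSum,
    sum_range_two_mul_add_one]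
  simp only [Polynomial.map_monomial, Polynomial.eval_monomial, eq_ratCast]
  push_cast
  rw [hodd, neg_mul, ← sub_eq_add_neg]

theorem riemannZeta_two_mul_nat_eq_two_pi_pow (j : ℕ) :
    riemannZeta (2 * j) =
      (-1) ^ (j + 1) * (2 * π) ^ (2 * j) * bernoulli (2 * j) / (2 * (2 * j)!) := by
  rw [riemannZeta_two_mul_nat', zpow_sub₀ two_ne_zero, zpow_one,
    show 2 * (j : ℤ) = (2 * j : ℕ) by push_cast; ring, zpow_natCast, mul_pow]
  field_simp

theorem mul_bernoulli_mul_choose_mul_pow_eq_riemannZeta (i j : ℕ) (y : ℂ) :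
    (-1) ^ (i + j + 1) * (2 * π) ^ (2 * (i + j)) / 2 / (2 * (i + j))! *
        ((bernoulli (2 * j) : ℂ) * ((2 * (i + j)).choose (2 * j) : ℂ) * y ^ (2 * i))
      = (-1) ^ i / (2 * i)! * (2 * π * y) ^ (2 * i) * riemannZeta (2 * j) := by
  have hchoose : ((2 * (i + j)).choose (2 * j) : ℂ) * (2 * i)! * (2 * j)! = (2 * (i + j))! := by
    rw [mul_add]
    exact_mod_cast Nat.add_choose_mul_factorial_mul_factorial (2 * i) (2 * j)
  have hchoose_ne : ((2 * (i + j)).choose (2 * j) : ℂ) ≠ 0 := by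
    exact_mod_cast (Nat.choose_pos (by omega)).ne'
  have hi : ((2 * i)! : ℂ) ≠ 0 := by exact_mod_cast Nat.factorial_ne_zero _
  have hj : ((2 * j)! : ℂ) ≠ 0 := by exact_mod_cast Nat.factorial_ne_zero _
  rw [riemannZeta_two_mul_nat_eq_two_pi_pow, ← hchoose]
  field_simp
  ring

theorem tsum_one_div_nat_pow_mul_cos_eq_sum_riemannZeta {k : ℕ} (hk : k ≠ 0) {x : ℝ}
    (hx : x ∈ Set.Icc 0 1) :
    ((∑' n : ℕ, 1 / (n : ℝ) ^ (2 * k) * Real.cos (2 * π * n * x) : ℝ) : ℂ) =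
      ∑ j ∈ range (k + 1),
        (-1 : ℂ) ^ (k - j) / (2 * k - 2 * j)! * (2 * π * x) ^ (2 * k - 2 * j) * riemannZeta (2 * j)
      + (-1 : ℂ) ^ k * (2 * π) ^ (2 * k) * x ^ (2 * k - 1) / (4 * (2 * k - 1)!) := by
  rw [(hasSum_one_div_nat_pow_mul_cos hk hx).tsum_eq, Polynomial.eval_map_bernoulli_two_mul hk,
    mul_sub, mul_sum]
  push_cast
  rw [sub_eq_add_neg]
  congr 1
  · refine sum_congr rfl fun j hj => ?_
    obtain ⟨i, rfl⟩ := Nat.exists_eq_add_of_le' (mem_range_succ_iff.1 hj)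
    rw [show 2 * (i + j) - 2 * j = 2 * i by omega, Nat.add_sub_cancel]
    exact mul_bernoulli_mul_choose_mul_pow_eq_riemannZeta i j x
  · obtain ⟨m, rfl⟩ := Nat.exists_eq_add_one_of_ne_zero hk
    rw [show 2 * (m + 1) = 2 * m + 1 + 1 by ring, Nat.factorial_succ, Nat.add_sub_cancel]
    push_cast
    have hfac : ((2 * m + 1)! : ℂ) ≠ 0 := by exact_mod_cast Nat.factorial_ne_zero _
    have hsucc : (2 * m + 1 + 1 : ℂ) ≠ 0 := by exact_mod_cast (2 * m + 1).succ_ne_zero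
    field_simp
    ring

theorem hasSum_neg_one_pow_div_nat_pow {s : ℕ} (hs : 1 < s) :
    HasSum (fun n : ℕ => (-1 : ℝ) ^ n / (n : ℝ) ^ s)
      ((2 / 2 ^ s - 1) * ∑' n : ℕ, 1 / (n : ℝ) ^ s) := by
  have hζ : HasSum (fun n : ℕ => 1 / (n : ℝ) ^ s) (∑' n : ℕ, 1 / (n : ℝ) ^ s) :=
    (Real.summable_one_div_nat_pow.2 hs).hasSum
  -- adding the zeta series kills the odd terms and doubles the even ones
  have hdouble : HasSum (fun n : ℕ => (-1 : ℝ) ^ n / (n : ℝ) ^ s + 1 / (n : ℝ) ^ s)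
      (2 / 2 ^ s * ∑' n : ℕ, 1 / (n : ℝ) ^ s) := by
    rw [← add_zero (2 / 2 ^ s * _)]
    refine HasSum.even_add_odd ?_ ?_
    · refine (hζ.mul_left (2 / 2 ^ s)).congr_fun fun m => ?_
      rw [pow_mul, neg_one_sq, one_pow, Nat.cast_mul, mul_pow]
      push_cast
      ring
    · exact hasSum_zero.congr_fun fun m => by simp [pow_succ, neg_div]
  simpa [sub_mul] using hdouble.sub hζ

theorem ofReal_tsum_neg_one_pow_div_nat_pow {s : ℕ} (hs : 1 < s) :
    ((∑' n : ℕ, (-1 : ℝ) ^ n / (n : ℝ) ^ s : ℝ) : ℂ) =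
      (2 ^ (1 - (s : ℤ)) - 1) * riemannZeta s := by
  rw [(hasSum_neg_one_pow_div_nat_pow hs).tsum_eq, zeta_nat_eq_tsum_of_gt_one hs,
    zpow_sub₀ two_ne_zero, zpow_one, zpow_natCast]
  push_cast
  rfl

theorem tsum_neg_one_pow_succ_div_succ_pow {s : ℕ} (hs : 1 < s) :
    ∑' j : ℕ, (-1 : ℝ) ^ (j + 1) / ((j : ℝ) + 1) ^ s = ∑' n : ℕ, (-1 : ℝ) ^ n / (n : ℝ) ^ s := by
  rw [(hasSum_neg_one_pow_div_nat_pow hs).summable.tsum_eq_zero_add]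
  simp [show s ≠ 0 by omega]

theorem two_pow_sub_one_mul_riemannZeta_two_mul_eq_sum {k : ℕ} (hk : k ≠ 0) :
    ((2 : ℂ) ^ (1 - 2 * (k : ℤ)) - 1) * riemannZeta (2 * k) =
      ∑ j ∈ range (k + 1),
        (-1 : ℂ) ^ (k - j) / (2 * k - 2 * j)! * (π : ℂ) ^ (2 * k - 2 * j) * riemannZeta (2 * j)
      + (-1 : ℂ) ^ k / (2 * (2 * k - 1)!) * (π : ℂ) ^ (2 * k) := by
  have hs : 1 < 2 * k := by omega
  have hcos_half (n : ℕ) : Real.cos (2 * π * n * (1 / 2)) = (-1) ^ n := by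
    rw [← Real.cos_nat_mul_pi]
    ring_nf
  have hlast : (-1 : ℂ) ^ k * (2 * π) ^ (2 * k) * (1 / 2) ^ (2 * k - 1) / (4 * (2 * k - 1)!)
      = (-1) ^ k / (2 * (2 * k - 1)!) * π ^ (2 * k) := by
    have hfac : ((2 * k - 1)! : ℂ) ≠ 0 := by exact_mod_cast Nat.factorial_ne_zero _
    rw [pow_sub₀ _ (by norm_num) hs.le, one_div, inv_pow, mul_pow]
    field_simp
    ring
  have h := tsum_one_div_nat_pow_mul_cos_eq_sum_riemannZeta hk (x := 1 / 2) (by norm_num)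
  simp_rw [hcos_half, one_div_mul_eq_div] at h
  rw [ofReal_tsum_neg_one_pow_div_nat_pow hs] at h
  push_cast at h
  rwa [show 2 * (π : ℂ) * (1 / 2) = π by ring, hlast] at h

theorem alternating_zeta_even (k : ℕ) (hk : 1 ≤ k) :
    ((∑' j : ℕ, ((-1 : ℝ)) ^ (j + 1) / ((j : ℝ) + 1) ^ (2 * k) : ℝ) : ℂ) =
      (∑ j ∈ Finset.range (k + 1),
        ((-1 : ℂ) ^ (k - j) / (Nat.factorial (2 * k - 2 * j) : ℂ))
          * (π : ℂ) ^ (2 * k - 2 * j) * riemannZeta (2 * j))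
      + ((-1 : ℂ) ^ k / (2 * (Nat.factorial (2 * k - 1) : ℂ))) * (π : ℂ) ^ (2 * k)
    ∧ ((2 : ℂ) ^ (1 - 2 * (k : ℤ)) - 1) * riemannZeta (2 * k) =
      (∑ j ∈ Finset.range (k + 1),
        ((-1 : ℂ) ^ (k - j) / (Nat.factorial (2 * k - 2 * j) : ℂ))
          * (π : ℂ) ^ (2 * k - 2 * j) * riemannZeta (2 * j))
      + ((-1 : ℂ) ^ k / (2 * (Nat.factorial (2 * k - 1) : ℂ))) * (π : ℂ) ^ (2 * k) := by
  have hs : 1 < 2 * k := by omega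
  have h := two_pow_sub_one_mul_riemannZeta_two_mul_eq_sum (by omega : k ≠ 0)
  refine ⟨?_, h⟩
  rw [tsum_neg_one_pow_succ_div_succ_pow hs, ofReal_tsum_neg_one_pow_div_nat_pow hs]
  push_cast
  exact h
end

section
/- For every half-integer b (i.e., 2b an odd integer, b ≠ 0), lim_{n→∞} ( ∑_{j=1}^{n} 1/(j+b) − H(n) ) = −1/(2b) + (π/2)·∫₀¹ (−1 + u + cos(πbu))·cot(πu/2) du. -/
open Real Filter intervalIntegral

/-- The harmonic number `H(n) = ∑_{j=1}^n 1/j`. -/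
noncomputable def harmonicR (n : ℕ) : ℝ := ∑ j ∈ Finset.range n, (1 : ℝ) / (j + 1)

open MeasureTheory Set Topology

/-!
If `cos (π * b) = 0`, replacing `b` by `b + 1` changes the partial sums by
`-1/(1+b) + 1/(n+1+b)`, and, because
`(cos (π (b+1) u) - cos (π b u)) * cot (π u / 2) = -(sin (π (b+1) u) + sin (π b u))`,
it changes the right-hand side by exactly `-1/(1+b)` too. So the limit formula propagates along
`1/2 + ℤ` from `b = 1/2`, where the sum is `2 H(2n+1) - H(n) - 2 → 2 log 2 - 2` and the integral is
computed from an explicit primitive together with `∫₀^{π/2} log (sin x) dx = -(π/2) log 2`.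
-/

lemma le_sin_pi_mul_div_two {u : ℝ} (h0 : 0 ≤ u) (h1 : u ≤ 1) : u ≤ sin (π * u / 2) := by
  have := mul_le_sin (x := π * u / 2) (by positivity) (by nlinarith [pi_pos])
  rwa [show 2 / π * (π * u / 2) = u by field_simp] at this

lemma abs_cot_pi_mul_div_two_le {u : ℝ} (h0 : 0 < u) (h1 : u ≤ 1) :
    |cot (π * u / 2)| ≤ u⁻¹ := by
  have hsin := le_sin_pi_mul_div_two h0.le h1
  rw [cot_eq_cos_div_sin, abs_div, abs_of_pos (h0.trans_le hsin), div_eq_mul_inv, ← one_mul u⁻¹]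
  exact mul_le_mul (abs_cos_le_one _) (inv_anti₀ h0 hsin) (inv_nonneg.2 (h0.le.trans hsin))
    zero_le_one

@[fun_prop]
lemma measurable_cot : Measurable cot := by
  simp_rw [funext cot_eq_cos_div_sin]
  fun_prop

lemma cos_sub_cos_mul_cot {x y : ℝ} (h : sin ((x - y) / 2) ≠ 0) :
    (cos x - cos y) * cot ((x - y) / 2) = -(sin x + sin y) := by
  rw [cos_sub_cos, sin_add_sin, cot_eq_cos_div_sin]
  field_simp

lemma abs_neg_one_add_add_cos_le {u : ℝ} (hu : 0 ≤ u) (x : ℝ) :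
    |-1 + u + cos x| ≤ u + x ^ 2 / 2 := by
  have hlow := one_sub_sq_div_two_le_cos (x := x)
  have hup := cos_le_one x
  rw [abs_le]
  constructor <;> nlinarith

lemma integral_sin_mul {c : ℝ} (hc : c ≠ 0) : ∫ u in (0:ℝ)..1, sin (c * u) = (1 - cos c) / c := by
  rw [integral_comp_mul_left (fun x => sin x) hc, mul_zero, mul_one, integral_sin, cos_zero,
    smul_eq_mul, inv_mul_eq_div]

lemma intervalIntegrable_log_sin_pi_mul_div_two :
    IntervalIntegrable (fun u => log (sin (π * u / 2))) volume 0 1 := by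
  have : AnalyticOnNhd ℝ (fun u => sin (π * u / 2)) (uIcc 0 1) := fun u _ => by fun_prop
  exact this.meromorphicOn.intervalIntegrable_log

lemma integral_log_sin_pi_mul_div_two :
    ∫ u in (0:ℝ)..1, log (sin (π * u / 2)) = -log 2 := by
  simp_rw [mul_div_right_comm π]
  rw [integral_comp_mul_left (fun x => log (sin x)) (by positivity), mul_one, mul_zero,
    integral_log_sin_zero_pi_div_two, smul_eq_mul]
  field_simp

lemma tendsto_mul_log_sin_pi_mul_div_two :
    Tendsto (fun u => u * log (sin (π * u / 2))) (𝓝[>] 0) (𝓝 0) := by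
  refine squeeze_zero_norm' ?_
    ((continuous_mul_log.norm.tendsto' 0 0 (by simp)).mono_left nhdsWithin_le_nhds)
  filter_upwards [Ioo_mem_nhdsGT zero_lt_one] with u ⟨h0, h1⟩
  have hsin := le_sin_pi_mul_div_two h0.le h1.le
  have hlog_le : log u ≤ log (sin (π * u / 2)) := log_le_log h0 hsin
  have hlog_nonpos : log (sin (π * u / 2)) ≤ 0 := log_nonpos (h0.le.trans hsin) (sin_le_one _)
  rw [norm_mul, norm_mul]
  gcongr
  rw [norm_eq_abs, norm_eq_abs, abs_of_nonpos hlog_nonpos,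
    abs_of_nonpos (hlog_le.trans hlog_nonpos)]
  linarith

noncomputable def cotIntegral (b : ℝ) : ℝ :=
  ∫ u in (0:ℝ)..1, (-1 + u + cos (π * b * u)) * cot (π * u / 2)

lemma intervalIntegrable_cotIntegrand (b : ℝ) :
    IntervalIntegrable (fun u => (-1 + u + cos (π * b * u)) * cot (π * u / 2)) volume 0 1 := by
  refine IntervalIntegrable.mono_fun' (g := fun _ => 1 + (π * b) ^ 2 / 2)
    intervalIntegrable_const (by fun_prop) ?_
  rw [EventuallyLE, ae_restrict_iff' measurableSet_uIoc, uIoc_of_le zero_le_one]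
  refine .of_forall fun u ⟨h0, h1⟩ => ?_
  calc ‖(-1 + u + cos (π * b * u)) * cot (π * u / 2)‖
      = |-1 + u + cos (π * b * u)| * |cot (π * u / 2)| := abs_mul _ _
    _ ≤ (u + (π * b * u) ^ 2 / 2) * u⁻¹ :=
        mul_le_mul (abs_neg_one_add_add_cos_le h0.le _) (abs_cot_pi_mul_div_two_le h0 h1)
          (abs_nonneg _) (by positivity)
    _ = 1 + (π * b) ^ 2 / 2 * u := by field_simp
    _ ≤ 1 + (π * b) ^ 2 / 2 := by gcongr; exact mul_le_of_le_one_right (by positivity) h1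

lemma cotIntegral_add_one {b : ℝ} (hb : cos (π * b) = 0) :
    cotIntegral (b + 1) = cotIntegral b - (1 / b + 1 / (b + 1)) / π := by
  have hb0 : b ≠ 0 := by rintro rfl; simp at hb
  have hb1 : b + 1 ≠ 0 := by
    intro h; rw [eq_neg_of_add_eq_zero_left h] at hb; simp at hb
  have hshift : cos (π * (b + 1)) = 0 := by rw [mul_add_one, cos_add_pi, hb, neg_zero]
  have hpoint : ∀ u ∈ Ioc (0 : ℝ) 1,
      (-1 + u + cos (π * (b + 1) * u)) * cot (π * u / 2)
        = (-1 + u + cos (π * b * u)) * cot (π * u / 2)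
          - (sin (π * (b + 1) * u) + sin (π * b * u)) := by
    intro u ⟨h0, h1⟩
    have hhalf : (π * (b + 1) * u - π * b * u) / 2 = π * u / 2 := by ring
    have hsin : sin ((π * (b + 1) * u - π * b * u) / 2) ≠ 0 := by
      rw [hhalf]
      exact (h0.trans_le (le_sin_pi_mul_div_two h0.le h1)).ne'
    have := cos_sub_cos_mul_cot hsin
    rw [hhalf] at this
    linear_combination this
  unfold cotIntegral
  rw [integral_congr_ae (.of_forall fun u hu => hpoint u (by rwa [uIoc_of_le zero_le_one] at hu)),
    integral_sub (intervalIntegrable_cotIntegrand b)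
      (Continuous.intervalIntegrable (by fun_prop) _ _),
    integral_add (Continuous.intervalIntegrable (by fun_prop) _ _)
      (Continuous.intervalIntegrable (by fun_prop) _ _),
    integral_sin_mul (mul_ne_zero pi_ne_zero hb1), integral_sin_mul (mul_ne_zero pi_ne_zero hb0),
    hb, hshift]
  congr 1
  field_simp
  ring

/-- The term `u * log (sin (π * u / 2))` comes from integrating `u * cot (π * u / 2)` by parts,
which is why the derivative carries the extra `2 / π * log (sin (π * u / 2))`. -/
lemma hasDerivAt_cotIntegrand_one_half_primitive {u : ℝ} (h0 : 0 < u) (h1 : u < 1) :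
    HasDerivAt (fun u => 2 / π * (u * log (sin (π * u / 2)) - log (1 + cos (π * u / 2))
        + cos (π * u / 2)))
      ((-1 + u + cos (π * (1 / 2) * u)) * cot (π * u / 2) + 2 / π * log (sin (π * u / 2))) u := by
  have hsin : 0 < sin (π * u / 2) := h0.trans_le (le_sin_pi_mul_div_two h0.le h1.le)
  have hcos : 0 < 1 + cos (π * u / 2) := by
    have : 0 < cos (π * u / 2) :=
      cos_pos_of_mem_Ioo ⟨by nlinarith [pi_pos], by nlinarith [pi_pos]⟩
    linarith
  have hlin : HasDerivAt (fun u => π * u / 2) (π / 2) u := by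
    simpa using ((hasDerivAt_id u).const_mul π).div_const 2
  have hs : HasDerivAt (fun u => sin (π * u / 2)) (cos (π * u / 2) * (π / 2)) u :=
    (hasDerivAt_sin _).comp u hlin
  have hc : HasDerivAt (fun u => cos (π * u / 2)) (-sin (π * u / 2) * (π / 2)) u :=
    (hasDerivAt_cos _).comp u hlin
  refine ((((hasDerivAt_id' u).mul (hs.log hsin.ne')).sub
    ((hc.const_add 1).log hcos.ne')).add hc |>.const_mul (2 / π)).congr_deriv ?_
  rw [show π * (1 / 2) * u = π * u / 2 by ring, cot_eq_cos_div_sin]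
  field_simp
  linear_combination -π * cos (π * u / 2) * sin_sq_add_cos_sq (π * u / 2)

lemma cotIntegral_one_half : cotIntegral (1 / 2) = 2 / π * (2 * log 2 - 1) := by
  set F := fun u => 2 / π * (u * log (sin (π * u / 2)) - log (1 + cos (π * u / 2))
    + cos (π * u / 2))
  have hF0 : Tendsto F (𝓝[>] 0) (𝓝 (2 / π * (0 - log 2 + 1))) := by
    have hlog : ContinuousAt (fun u => log (1 + cos (π * u / 2))) 0 := by
      fun_prop (disch := norm_num)
    have hcos : ContinuousAt (fun u => cos (π * u / 2)) 0 := by fun_prop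
    convert ((tendsto_mul_log_sin_pi_mul_div_two.sub
      (hlog.tendsto.mono_left nhdsWithin_le_nhds)).add
      (hcos.tendsto.mono_left nhdsWithin_le_nhds)).const_mul (2 / π) using 4 <;> norm_num
  have hF1 : Tendsto F (𝓝[<] 1) (𝓝 0) := by
    have : ContinuousAt F 1 := by fun_prop (disch := norm_num)
    convert this.tendsto.mono_left nhdsWithin_le_nhds
    norm_num [F]
  have hlog := intervalIntegrable_log_sin_pi_mul_div_two.const_mul (2 / π)
  have hFTC := integral_eq_sub_of_hasDerivAt_of_tendsto zero_lt_one
    (fun u hu => hasDerivAt_cotIntegrand_one_half_primitive hu.1 hu.2)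
    ((intervalIntegrable_cotIntegrand _).add hlog) hF0 hF1
  rw [integral_add (intervalIntegrable_cotIntegrand _) hlog, intervalIntegral.integral_const_mul,
    integral_log_sin_pi_mul_div_two] at hFTC
  unfold cotIntegral
  linear_combination hFTC

noncomputable def shiftedHarmonic (b : ℝ) (n : ℕ) : ℝ :=
  ∑ j ∈ Finset.range n, 1 / ((j : ℝ) + 1 + b)

lemma shiftedHarmonic_add_one (b : ℝ) (n : ℕ) :
    shiftedHarmonic (b + 1) n + 1 / (1 + b) = shiftedHarmonic b n + 1 / (n + 1 + b) := by
  have h := (Finset.sum_range_succ' (fun j : ℕ => 1 / ((j : ℝ) + 1 + b)) n).symm.trans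
    (Finset.sum_range_succ _ n)
  simp only [Nat.cast_add, Nat.cast_one, Nat.cast_zero, zero_add] at h
  simpa only [shiftedHarmonic, add_assoc, add_comm 1 b] using h

lemma harmonicR_eq_harmonic (n : ℕ) : harmonicR n = harmonic n := by
  simp [harmonicR, harmonic, one_div]

lemma shiftedHarmonic_one_half (n : ℕ) :
    shiftedHarmonic (1 / 2) n = 2 * harmonicR (2 * n + 1) - harmonicR n - 2 := by
  induction n with
  | zero => norm_num [shiftedHarmonic, harmonicR]
  | succ n ih =>
    rw [shiftedHarmonic, Finset.sum_range_succ, ← shiftedHarmonic, ih,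
      show 2 * (n + 1) + 1 = 2 * n + 1 + 1 + 1 by ring]
    simp only [harmonicR, Finset.sum_range_succ]
    push_cast
    field_simp
    ring

lemma tendsto_harmonic_two_mul_add_one_sub_harmonic :
    Tendsto (fun n : ℕ => (harmonic (2 * n + 1) : ℝ) - harmonic n) atTop (𝓝 (log 2)) := by
  have hodd : Tendsto (fun n : ℕ => 2 * n + 1) atTop atTop :=
    tendsto_atTop_mono (fun n => by dsimp; omega) tendsto_id
  have h := ((tendsto_harmonic_sub_log_add_one.comp hodd).sub
    tendsto_harmonic_sub_log_add_one).add_const (log 2)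
  rw [sub_self, zero_add] at h
  refine h.congr fun n => ?_
  have hlog : log (((2 * n + 1 : ℕ) : ℝ) + 1) = log 2 + log ((n : ℝ) + 1) := by
    rw [← log_mul two_ne_zero (by positivity)]
    push_cast
    ring_nf
  simp only [Function.comp_apply, hlog]
  ring

lemma tendsto_shiftedHarmonic_one_half_sub_harmonicR :
    Tendsto (fun n => shiftedHarmonic (1 / 2) n - harmonicR n) atTop (𝓝 (2 * log 2 - 2)) := by
  have h := (tendsto_harmonic_two_mul_add_one_sub_harmonic.const_mul 2).sub_const 2
  refine h.congr fun n => ?_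
  simp only [shiftedHarmonic_one_half, harmonicR_eq_harmonic]
  ring

lemma tendsto_shiftedHarmonic_add_one_sub_harmonicR_iff (b L : ℝ) :
    Tendsto (fun n => shiftedHarmonic (b + 1) n - harmonicR n) atTop (𝓝 (L - 1 / (1 + b))) ↔
      Tendsto (fun n => shiftedHarmonic b n - harmonicR n) atTop (𝓝 L) := by
  have htail : Tendsto (fun n : ℕ => 1 / ((n : ℝ) + 1 + b)) atTop (𝓝 0) := by
    simpa only [add_assoc, one_div, Pi.inv_def] using
      (tendsto_natCast_atTop_atTop.atTop_add (tendsto_const_nhds (x := 1 + b))).inv_tendsto_atTop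
  have hshift (n : ℕ) : shiftedHarmonic (b + 1) n - harmonicR n
      = shiftedHarmonic b n - harmonicR n - 1 / (1 + b) + 1 / (n + 1 + b) := by
    linarith [shiftedHarmonic_add_one b n]
  simp only [hshift]
  constructor
  · intro h
    convert (h.add_const (1 / (1 + b))).sub htail using 2 <;> ring
  · intro h
    convert (h.sub_const (1 / (1 + b))).add htail using 2
    ring

noncomputable def limitFormula (b : ℝ) : ℝ := -1 / (2 * b) + π / 2 * cotIntegral b

lemma limitFormula_add_one {b : ℝ} (hb : cos (π * b) = 0) :
    limitFormula (b + 1) = limitFormula b - 1 / (1 + b) := by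
  rw [limitFormula, limitFormula, cotIntegral_add_one hb]
  field_simp
  ring

lemma tendsto_nhds_limitFormula_add_one_iff {b : ℝ} (hb : cos (π * b) = 0) :
    Tendsto (fun n => shiftedHarmonic (b + 1) n - harmonicR n) atTop
        (𝓝 (limitFormula (b + 1))) ↔
      Tendsto (fun n => shiftedHarmonic b n - harmonicR n) atTop (𝓝 (limitFormula b)) := by
  rw [limitFormula_add_one hb]
  exact tendsto_shiftedHarmonic_add_one_sub_harmonicR_iff b _

lemma tendsto_shiftedHarmonic_sub_harmonicR (k : ℤ) :
    Tendsto (fun n => shiftedHarmonic (k + 1 / 2) n - harmonicR n) atTop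
      (𝓝 (limitFormula (k + 1 / 2))) := by
  have hstep (i : ℤ) := tendsto_nhds_limitFormula_add_one_iff (b := i + 1 / 2)
    (cos_eq_zero_iff.2 ⟨i, by ring⟩)
  induction k using Int.induction_on with
  | zero =>
    convert tendsto_shiftedHarmonic_one_half_sub_harmonicR using 3
    · simp
    · rw [Int.cast_zero, zero_add, limitFormula, cotIntegral_one_half]
      field_simp
      ring
  | succ i ih =>
    have := (hstep i).2 ih
    push_cast
    rwa [add_right_comm]
  | pred i ih =>
    have := hstep (-i - 1)
    push_cast at this ih ⊢
    rw [show (-(i : ℝ) - 1 + 1 / 2 + 1) = -i + 1 / 2 by ring] at this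
    exact this.1 ih

theorem hp_sub_harmonic_limit_half_integer_general (b : ℝ)
    (hb2 : ∃ z : ℤ, Odd z ∧ 2 * b = (z : ℝ)) :
    Filter.Tendsto
      (fun n : ℕ => (∑ j ∈ Finset.range n, 1 / ((j : ℝ) + 1 + b)) - harmonicR n)
      Filter.atTop
      (nhds (-1 / (2 * b) + (π / 2) *
        ∫ u in (0:ℝ)..1, (-1 + u + Real.cos (π * b * u)) * Real.cot (π * u / 2))) := by
  obtain ⟨z, ⟨k, rfl⟩, h2b⟩ := hb2
  obtain rfl : b = k + 1 / 2 := by push_cast at h2b; linarith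
  exact tendsto_shiftedHarmonic_sub_harmonicR k

theorem hp_sub_harmonic_limit_half_integer (b : ℝ) (hb : b ≠ 0)
    (hb2 : ∃ z : ℤ, Odd z ∧ 2 * b = (z : ℝ)) :
    Filter.Tendsto
      (fun n : ℕ => (∑ j ∈ Finset.range n, 1 / ((j : ℝ) + 1 + b)) - harmonicR n)
      Filter.atTop
      (nhds (-1 / (2 * b) + (π / 2) *
        ∫ u in (0:ℝ)..1, (-1 + u + Real.cos (π * b * u)) * Real.cot (π * u / 2))) :=
  hp_sub_harmonic_limit_half_integer_general b hb2
end
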